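/- Let W = (x^2 - 1)(x^3 + a x^2 + b x + r) with a > 0, b ≠ 0, r ≠ 0, b ≠ 1, r ≠ a, so that all coefficients of W = x^5 + a x^4 + (b-1) x^3 + (r-a) x^2 - b x - r are nonzero. If the sign pattern of W has exactly one more sign change than the sign pattern of x^3 + a x^2 + b x + r, then the sign pattern of W contains, in some four consecutive positions, one of the configurations (+,+,-,-), (-,-,+,+), (+,-,-,+), (-,+,+,-). -/

import Mathlib

open Polynomial

/-- The number of sign changes in the coefficient sequence of a polynomial. -/
noncomputable def signChanges (Q : Polynomial ℝ) : ℕ :=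
  ((Finset.range Q.natDegree).filter (fun j => Q.coeff j * Q.coeff (j + 1) < 0)).card

/-- The sign pattern of `Q` (read from leading coefficient to constant term) contains
one of the configurations `A = (+,+,-,-)`, `B = (-,-,+,+)`, `C = (+,-,-,+)`,
`D = (-,+,+,-)` in four consecutive positions. -/
def hasConfig (Q : Polynomial ℝ) : Prop :=
  ∃ j, j + 3 ≤ Q.natDegree ∧
    ((0 < Q.coeff (Q.natDegree - j) ∧ 0 < Q.coeff (Q.natDegree - (j + 1)) ∧
        Q.coeff (Q.natDegree - (j + 2)) < 0 ∧ Q.coeff (Q.natDegree - (j + 3)) < 0) ∨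
     (Q.coeff (Q.natDegree - j) < 0 ∧ Q.coeff (Q.natDegree - (j + 1)) < 0 ∧
        0 < Q.coeff (Q.natDegree - (j + 2)) ∧ 0 < Q.coeff (Q.natDegree - (j + 3))) ∨
     (0 < Q.coeff (Q.natDegree - j) ∧ Q.coeff (Q.natDegree - (j + 1)) < 0 ∧
        Q.coeff (Q.natDegree - (j + 2)) < 0 ∧ 0 < Q.coeff (Q.natDegree - (j + 3))) ∨
     (Q.coeff (Q.natDegree - j) < 0 ∧ 0 < Q.coeff (Q.natDegree - (j + 1)) ∧
        0 < Q.coeff (Q.natDegree - (j + 2)) ∧ Q.coeff (Q.natDegree - (j + 3)) < 0))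

/-! Reading from the leading term, `(X² - 1)(X³ + aX² + bX + r)` has coefficients
`1, a, b - 1, r - a, -b, -r`. For each choice of signs of `b - 1` and `r - a`, one of its three
windows of four consecutive coefficients is a configuration, except when `0 ≤ b < 1` and `r > a`.
There the cubic has no sign change at all, while `a, b - 1, r - a` already gives two. -/

lemma signChanges_eq_zero_of_coeff_nonneg (Q : ℝ[X]) (h : ∀ j, 0 ≤ Q.coeff j) :
    signChanges Q = 0 := by
  rw [signChanges, Finset.card_eq_zero, Finset.filter_eq_empty_iff]
  exact fun j _ => not_lt.mpr (mul_nonneg (h j) (h (j + 1)))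

lemma card_le_signChanges (Q : ℝ[X]) (s : Finset ℕ)
    (hs : ∀ j ∈ s, j < Q.natDegree ∧ Q.coeff j * Q.coeff (j + 1) < 0) :
    s.card ≤ signChanges Q :=
  Finset.card_le_card fun j hj => by simpa using hs j hj

noncomputable def cubic (a b r : ℝ) : ℝ[X] := X ^ 3 + C a * X ^ 2 + C b * X + C r

lemma coeff_cubic (a b r : ℝ) (j : ℕ) : (cubic a b r).coeff j = [r, b, a, 1].getD j 0 := by
  rcases j with _ | _ | _ | _ | j <;> simp [cubic, coeff_X, coeff_X_pow, coeff_C]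

lemma coeff_X_sq_sub_one_mul_cubic (a b r : ℝ) (j : ℕ) :
    ((X ^ 2 - 1) * cubic a b r).coeff j = [-r, -b, r - a, b - 1, a, 1].getD j 0 := by
  rcases j with _ | _ | _ | _ | _ | _ | j <;>
    simp [sub_mul, coeff_X_pow_mul', coeff_cubic]

lemma natDegree_X_sq_sub_one_mul_cubic (a b r : ℝ) :
    ((X ^ 2 - 1) * cubic a b r).natDegree = 5 := by
  unfold cubic; compute_degree!

lemma signChanges_X_sq_sub_one_mul_cubic_ne_succ {a b r : ℝ} (ha : 0 < a) (hb : 0 ≤ b)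
    (hb1 : b < 1) (hra : a < r) :
    signChanges ((X ^ 2 - 1) * cubic a b r) ≠ signChanges (cubic a b r) + 1 := by
  have hP : signChanges (cubic a b r) = 0 := by
    refine signChanges_eq_zero_of_coeff_nonneg _ fun j => ?_
    rw [coeff_cubic]
    rcases j with _ | _ | _ | _ | j <;>
      simp only [List.getD_cons_zero, List.getD_cons_succ, List.getD_nil] <;> linarith
  have hW : 2 ≤ signChanges ((X ^ 2 - 1) * cubic a b r) := by
    refine card_le_signChanges _ {2, 3} fun j hj => ?_
    rw [natDegree_X_sq_sub_one_mul_cubic, coeff_X_sq_sub_one_mul_cubic,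
      coeff_X_sq_sub_one_mul_cubic]
    simp only [Finset.mem_insert, Finset.mem_singleton] at hj
    rcases hj with rfl | rfl
    · exact ⟨by norm_num, mul_neg_of_pos_of_neg (sub_pos.mpr hra) (sub_neg.mpr hb1)⟩
    · exact ⟨by norm_num, mul_neg_of_neg_of_pos (sub_neg.mpr hb1) ha⟩
  omega

theorem degree_five_case_general (a b r : ℝ) (ha : 0 < a) (hb1 : b ≠ 1) (hra : r ≠ a)
    (hsc : signChanges ((X ^ 2 - 1) * (X ^ 3 + C a * X ^ 2 + C b * X + C r)) =
      signChanges (X ^ 3 + C a * X ^ 2 + C b * X + C r) + 1) :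
    hasConfig ((X ^ 2 - 1) * (X ^ 3 + C a * X ^ 2 + C b * X + C r)) := by
  change signChanges ((X ^ 2 - 1) * cubic a b r) = signChanges (cubic a b r) + 1 at hsc
  change hasConfig ((X ^ 2 - 1) * cubic a b r)
  rw [hasConfig, natDegree_X_sq_sub_one_mul_cubic]
  simp only [coeff_X_sq_sub_one_mul_cubic]
  rcases (sub_ne_zero.mpr hb1).lt_or_gt with hb1_neg | hb1_pos <;>
    rcases (sub_ne_zero.mpr hra).lt_or_gt with hra_neg | hra_pos
  · exact ⟨0, by norm_num, Or.inl ⟨one_pos, ha, hb1_neg, hra_neg⟩⟩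
  · have hr : 0 < r := by linarith
    rcases lt_or_ge b 0 with hb | hb
    · exact ⟨2, by norm_num,
        Or.inr (Or.inr (Or.inr ⟨hb1_neg, hra_pos, neg_pos.mpr hb, neg_neg_of_pos hr⟩))⟩
    · exact absurd hsc
        (signChanges_X_sq_sub_one_mul_cubic_ne_succ ha hb (by linarith) (by linarith))
  · exact ⟨1, by norm_num, Or.inl ⟨ha, hb1_pos, hra_neg, neg_neg_of_pos (by linarith)⟩⟩
  · have hb : 0 < b := by linarith
    have hr : 0 < r := by linarith
    exact ⟨2, by norm_num,
      Or.inl ⟨hb1_pos, hra_pos, neg_neg_of_pos hb, neg_neg_of_pos hr⟩⟩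

/-- Degree-5 case: for `W = (x²-1)(x³ + a x² + b x + r)` with `a > 0` and all
coefficients of `W` nonzero, if the sign pattern of `W` has exactly one more sign change
than that of `x³ + a x² + b x + r`, then the sign pattern of `W` contains one of the
configurations `(+,+,-,-)`, `(-,-,+,+)`, `(+,-,-,+)`, `(-,+,+,-)`. -/
theorem degree_five_case (a b r : ℝ) (ha : 0 < a) (hb : b ≠ 0) (hr : r ≠ 0)
    (hb1 : b ≠ 1) (hra : r ≠ a)
    (hsc : signChanges ((X ^ 2 - 1) * (X ^ 3 + C a * X ^ 2 + C b * X + C r)) =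
      signChanges (X ^ 3 + C a * X ^ 2 + C b * X + C r) + 1) :
    hasConfig ((X ^ 2 - 1) * (X ^ 3 + C a * X ^ 2 + C b * X + C r)) :=
  degree_five_case_general a b r ha hb1 hra hsc
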